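/- If π : (G,h) → (G',h') is a weighted edge contraction between finite connected weighted graphs (without legs), then the genus is preserved: b1(G) + Σ_{v ∈ V(G)} h(v) = b1(G') + Σ_{v' ∈ V(G')} h'(v'). -/

import Mathlib

open CategoryTheory

/-- A finite graph in the sense of Serre (without legs): a set `X` with an idempotent
root map `r` and an involution `i` commuting with `r`, fixing vertices, and without
fixed half-edges. -/
structure SGraph : Type 1 where
  X : Type
  r : X → X
  i : X → X
  r_idem : ∀ x, r (r x) = r x
  i_invol : ∀ x, i (i x) = x
  r_i : ∀ x, r (i x) = i (r x)
  i_vertex : ∀ x, r x = x → i x = x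
  no_legs : ∀ x, r x ≠ x → i x ≠ x

namespace SGraph

/-- Vertices: the fixed points (= image) of the root map. -/
def V (G : SGraph) : Type := {x : G.X // G.r x = x}

/-- Half-edges: the complement of the vertex set. -/
def HalfEdges (G : SGraph) : Type := {x : G.X // G.r x ≠ x}

/-- Unoriented edges: half-edges modulo the involution. -/
def E (G : SGraph) : Type := Quot (fun a b : G.HalfEdges => a.1 = G.i b.1)

noncomputable def numV (G : SGraph) : ℕ := Nat.card G.V

noncomputable def numE (G : SGraph) : ℕ := Nat.card G.E

/-- The first Betti number `#E - #V + 1` (as an integer). -/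
noncomputable def b1Z (G : SGraph) : ℤ := (G.numE : ℤ) - (G.numV : ℤ) + 1

/-- The genus `b1(G) + Σ_v h(v)` of a weighted graph (as an integer). -/
noncomputable def genusZ (G : SGraph) (h : G.X → ℕ) : ℤ :=
  G.b1Z + ∑ᶠ v : G.V, (h v.1 : ℤ)

/-- Two elements are adjacent if they are the two end vertices of an oriented edge. -/
def Adj (G : SGraph) (v w : G.X) : Prop :=
  ∃ f : G.X, G.r f ≠ f ∧ v = G.r (G.i f) ∧ w = G.r f

/-- A graph is connected if it is nonempty and any two vertices are joined by a path. -/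
def Connected (G : SGraph) : Prop :=
  Nonempty G.X ∧ ∀ v w : G.X, G.r v = v → G.r w = w → Relation.ReflTransGen G.Adj v w

theorem half_i (G : SGraph) {f : G.X} (hf : G.r f ≠ f) : G.r (G.i f) ≠ G.i f := by
  intro h
  have h2 : G.i (G.r f) = G.i f := (G.r_i f).symm.trans h
  have h3 := congrArg G.i h2
  rw [G.i_invol, G.i_invol] at h3
  exact hf h3

theorem rf_eq (G : SGraph) (f : G.X) : G.r f = G.r (G.i (G.i f)) := by rw [G.i_invol]

/-- The subgraph induced on a subset of `X` that is closed under `r` and `i`. -/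
def restrict (G : SGraph) (S : Set G.X) (hr : ∀ x ∈ S, G.r x ∈ S)
    (hi : ∀ x ∈ S, G.i x ∈ S) : SGraph where
  X := ↥S
  r x := ⟨G.r x.1, hr x.1 x.2⟩
  i x := ⟨G.i x.1, hi x.1 x.2⟩
  r_idem x := Subtype.ext (G.r_idem x.1)
  i_invol x := Subtype.ext (G.i_invol x.1)
  r_i x := Subtype.ext (G.r_i x.1)
  i_vertex x hx := Subtype.ext (G.i_vertex x.1 (congrArg Subtype.val hx))
  no_legs x hx hc := G.no_legs x.1 (fun hc' => hx (Subtype.ext hc')) (congrArg Subtype.val hc)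

end SGraph

/-- A graph of groups on a graph `G`: a group for every vertex, a group for every half-edge,
isomorphisms `G_f ≅ G_{i f}` and injections `G_f ↪ G_{r f}`. -/
structure GraphOfGroups (G : SGraph) : Type 1 where
  VG : G.X → GrpCat.{0}
  EG : G.X → GrpCat.{0}
  bar : ∀ f : G.X, EG f ≃* EG (G.i f)
  inc : ∀ f : G.X, EG f →* VG (G.r f)
  inc_inj : ∀ f : G.X, Function.Injective (inc f)

namespace GraphOfGroups

variable {G : SGraph}

/-- The graph of groups `𝔾(G,h)` associated to a weighted graph: the vertex group at `v` is
the free group of rank `h v` and all edge groups are trivial. -/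
def ofWeight (G : SGraph) (h : G.X → ℕ) : GraphOfGroups G where
  VG v := GrpCat.of (FreeGroup (Fin (h v)))
  EG _ := GrpCat.of PUnit
  bar _ := MulEquiv.refl _
  inc _ := 1
  inc_inj _ a b _ := Subsingleton.elim (α := PUnit) a b

/-- The trivial graph of groups on `G`: all vertex and edge groups are trivial. -/
def triv (G : SGraph) : GraphOfGroups G where
  VG _ := GrpCat.of PUnit
  EG _ := GrpCat.of PUnit
  bar _ := MulEquiv.refl _
  inc _ := 1
  inc_inj _ a b _ := Subsingleton.elim (α := PUnit) a b

/-- Generators for the fundamental groupoid of a graph of groups: an arrow for every oriented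
edge of the graph, and a loop at `v` for every element of the vertex group at `v`. -/
inductive Gen (𝔾 : GraphOfGroups G) : G.V → G.V → Type
  | edge (f : G.X) (hf : G.r f ≠ f) (a b : G.V)
      (ha : a.1 = G.r (G.i f)) (hb : b.1 = G.r f) : Gen 𝔾 a b
  | elt (v : G.V) (g : 𝔾.VG v.1) : Gen 𝔾 v v

/-- The objects of the fundamental groupoid: the vertices of `G`. -/
structure PObj (𝔾 : GraphOfGroups G) : Type where
  v : G.V

instance (𝔾 : GraphOfGroups G) : Quiver (PObj 𝔾) :=
  ⟨fun a b => Gen 𝔾 a.v b.v⟩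

/-- A vertex, as an object of the path category on the generating quiver. -/
def vtx (𝔾 : GraphOfGroups G) (v : G.V) : Paths (PObj 𝔾) := show PObj 𝔾 from ⟨v⟩

/-- The source vertex `r(i f)` of the oriented edge `f`. -/
def src (𝔾 : GraphOfGroups G) (f : G.X) : Paths (PObj 𝔾) :=
  show PObj 𝔾 from ⟨⟨G.r (G.i f), G.r_idem _⟩⟩

/-- The target vertex `r f` of the oriented edge `f`. -/
def tgt (𝔾 : GraphOfGroups G) (f : G.X) : Paths (PObj 𝔾) :=
  show PObj 𝔾 from ⟨⟨G.r f, G.r_idem f⟩⟩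

/-- The oriented edge `f` as a morphism in the path category. -/
def edgePath (𝔾 : GraphOfGroups G) (f : G.X) (hf : G.r f ≠ f) : 𝔾.src f ⟶ 𝔾.tgt f :=
  Quiver.Hom.toPath
    (show (⟨⟨G.r (G.i f), G.r_idem _⟩⟩ : PObj 𝔾) ⟶ ⟨⟨G.r f, G.r_idem f⟩⟩ from
      Gen.edge f hf _ _ rfl rfl)

/-- The reversed oriented edge `i f` as a morphism in the path category. -/
def edgePathRev (𝔾 : GraphOfGroups G) (f : G.X) (hf : G.r f ≠ f) : 𝔾.tgt f ⟶ 𝔾.src f :=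
  Quiver.Hom.toPath
    (show (⟨⟨G.r f, G.r_idem f⟩⟩ : PObj 𝔾) ⟶ ⟨⟨G.r (G.i f), G.r_idem _⟩⟩ from
      Gen.edge (G.i f) (G.half_i hf) _ _ (G.rf_eq f) rfl)

/-- A vertex group element `g ∈ G_v` as a loop at `v` in the path category. -/
def eltPath (𝔾 : GraphOfGroups G) (v : G.V) (g : 𝔾.VG v.1) : 𝔾.vtx v ⟶ 𝔾.vtx v :=
  Quiver.Hom.toPath (show (⟨v⟩ : PObj 𝔾) ⟶ ⟨v⟩ from Gen.elt v g)

/-- The defining relations of the fundamental groupoid of a graph of groups: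
the loops at `v` multiply as in the vertex group `G_v`, the reversal of an edge is its
inverse, and `e · a^g · ē = a^{ḡ}` for `g` in the edge group of `e`. -/
inductive Rel (𝔾 : GraphOfGroups G) :
    ∀ ⦃a b : Paths (PObj 𝔾)⦄, (a ⟶ b) → (a ⟶ b) → Prop
  | elt_one (v : G.V) : Rel 𝔾 (𝔾.eltPath v 1) (𝟙 (𝔾.vtx v))
  | elt_mul (v : G.V) (g g' : 𝔾.VG v.1) :
      Rel 𝔾 (𝔾.eltPath v g ≫ 𝔾.eltPath v g') (𝔾.eltPath v (g * g'))
  | edge_inv (f : G.X) (hf : G.r f ≠ f) :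
      Rel 𝔾 (𝔾.edgePath f hf ≫ 𝔾.edgePathRev f hf) (𝟙 (𝔾.src f))
  | edge_inv' (f : G.X) (hf : G.r f ≠ f) :
      Rel 𝔾 (𝔾.edgePathRev f hf ≫ 𝔾.edgePath f hf) (𝟙 (𝔾.tgt f))
  | conj (f : G.X) (hf : G.r f ≠ f) (g : 𝔾.EG f) :
      Rel 𝔾 (𝔾.edgePath f hf ≫ 𝔾.eltPath ⟨G.r f, G.r_idem f⟩ (𝔾.inc f g) ≫ 𝔾.edgePathRev f hf)
        (𝔾.eltPath ⟨G.r (G.i f), G.r_idem _⟩ (𝔾.inc (G.i f) (𝔾.bar f g)))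

/-- The fundamental groupoid `π₁(𝔾)` of a graph of groups, presented by generators
and relations as a quotient of the path category on the generating quiver. -/
abbrev FGpd (𝔾 : GraphOfGroups G) := CategoryTheory.Quotient (Rel 𝔾)

/-- A vertex of `G`, as an object of the fundamental groupoid `π₁(𝔾)`. -/
def FGpd.obj (𝔾 : GraphOfGroups G) (v : G.V) : FGpd 𝔾 := ⟨𝔾.vtx v⟩

theorem FGpd.obj_ext (𝔾 : GraphOfGroups G) {v w : G.V} (h : v.1 = w.1) :
    FGpd.obj 𝔾 v = FGpd.obj 𝔾 w :=
  congrArg (FGpd.obj 𝔾) (Subtype.ext h)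

end GraphOfGroups

/-- The subgraph of `G` induced on the preimage of a vertex `v'` under a graph morphism. -/
def preimageGraph (G G' : SGraph) (φ : G.X → G'.X)
    (hr : ∀ x, φ (G.r x) = G'.r (φ x)) (hi : ∀ x, φ (G.i x) = G'.i (φ x))
    (v' : G'.X) (hv : G'.r v' = v') : SGraph :=
  G.restrict {x | φ x = v'}
    (fun x hx => (hr x).trans (by rw [show φ x = v' from hx]; exact hv))
    (fun x hx => (hi x).trans (by rw [show φ x = v' from hx]; exact G'.i_vertex v' hv))

/-- A (generalized) weighted edge contraction `π : (G,h) → (G',h')`: a map of the underlying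
sets commuting with the root maps and involutions, such that every half-edge of `G'` has
exactly one preimage and the preimage of every vertex `v'` of `G'` is a connected subgraph
of genus `h' v'`. -/
structure WEC (G G' : SGraph) (h : G.X → ℕ) (h' : G'.X → ℕ) where
  toFun : G.X → G'.X
  map_r : ∀ x, toFun (G.r x) = G'.r (toFun x)
  map_i : ∀ x, toFun (G.i x) = G'.i (toFun x)
  halfedge_unique : ∀ f' : G'.X, G'.r f' ≠ f' → ∃! x : G.X, toFun x = f'
  preim_conn : ∀ (v' : G'.X) (hv : G'.r v' = v'),
    (preimageGraph G G' toFun map_r map_i v' hv).Connected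
  preim_genus : ∀ (v' : G'.X) (hv : G'.r v' = v'),
    (preimageGraph G G' toFun map_r map_i v' hv).genusZ (fun x => h x.1) = (h' v' : ℤ)

/-- The preimage of a vertex under a weighted edge contraction, as a subgraph. -/
def WEC.preim {G G' : SGraph} {h : G.X → ℕ} {h' : G'.X → ℕ} (π : WEC G G' h h')
    (v' : G'.X) (hv : G'.r v' = v') : SGraph :=
  preimageGraph G G' π.toFun π.map_r π.map_i v' hv

/-!
Write the genus as `#E + 1 + Σ_v (h v - 1)`. The vertices of `G` are partitioned by the fibers
`π⁻¹(v')`, and a half-edge of `G` either lies in one of these fibers or is the unique preimage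
of a half-edge of `G'`; hence `#E(G) = Σ_{v'} #E(π⁻¹(v')) + #E(G')`. Summing the fiber identities
`h' v' - 1 = #E(π⁻¹(v')) + Σ_{v ∈ π⁻¹(v')} (h v - 1)` over `v'` gives the genus of `G`.
-/

namespace SGraph

variable (G : SGraph)

instance [Finite G.X] : Finite G.V := Subtype.finite

instance [Finite G.X] : Finite G.HalfEdges := Subtype.finite

instance [Finite G.X] : Finite G.E := Quot.finite _

def edge (f : G.HalfEdges) : G.E := Quot.mk _ f

variable {G}

theorem edge_eq_edge_iff {a b : G.HalfEdges} :
    G.edge a = G.edge b ↔ a = b ∨ a.1 = G.i b.1 := by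
  refine ⟨fun hab => ?_, fun hab => hab.elim (congrArg G.edge) fun hab => Quot.sound hab⟩
  have hequiv : Equivalence (fun a b : G.HalfEdges => a = b ∨ a.1 = G.i b.1) := by
    refine ⟨fun _ => Or.inl rfl, ?_, ?_⟩
    · rintro x y (rfl | hxy)
      · exact Or.inl rfl
      · exact Or.inr (by rw [hxy, G.i_invol])
    · rintro x y z (rfl | hxy) (rfl | hyz)
      · exact Or.inl rfl
      · exact Or.inr hyz
      · exact Or.inr hxy
      · exact Or.inl (Subtype.ext (by rw [hxy, hyz, G.i_invol]))
  exact hequiv.eqvGen_iff.mp ((Quot.eqvGen_exact hab).mono fun _ _ => Or.inr)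

theorem card_edge_fiber (e : G.E) : Nat.card {f : G.HalfEdges // G.edge f = e} = 2 := by
  induction e using Quot.ind with
  | mk a =>
    rw [Nat.card_eq_two_iff]
    refine ⟨⟨a, rfl⟩, ⟨⟨G.i a.1, G.half_i a.2⟩, Quot.sound rfl⟩, ?_, ?_⟩
    · intro hc
      exact G.no_legs a.1 a.2 (congrArg (fun x => x.1.1) hc).symm
    · ext ⟨f, hf⟩
      simp only [Set.mem_insert_iff, Set.mem_singleton_iff, Set.mem_univ, iff_true]
      rcases edge_eq_edge_iff.mp hf with rfl | hfa
      · exact Or.inl rfl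
      · exact Or.inr (Subtype.ext (Subtype.ext hfa))

variable (G)

theorem card_halfEdges [Finite G.X] : Nat.card G.HalfEdges = 2 * Nat.card G.E := by
  have := Fintype.ofFinite G.E
  rw [← Nat.card_congr (Equiv.sigmaFiberEquiv G.edge), Nat.card_sigma]
  simp only [card_edge_fiber, Finset.sum_const, Finset.card_univ, smul_eq_mul,
    Nat.card_eq_fintype_card, mul_comm]

theorem genusZ_eq [Finite G.X] (h : G.X → ℕ) :
    G.genusZ h = Nat.card G.E + 1 + ∑ᶠ v : G.V, ((h v.1 : ℤ) - 1) := by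
  have := Fintype.ofFinite G.V
  simp only [genusZ, b1Z, numE, numV, finsum_eq_sum_of_fintype, Finset.sum_sub_distrib,
    Finset.sum_const, Finset.card_univ, Nat.card_eq_fintype_card, nsmul_eq_mul, mul_one]
  ring

end SGraph

namespace WEC

variable {G G' : SGraph} {h : G.X → ℕ} {h' : G'.X → ℕ} (π : WEC G G' h h')

def fiber (v' : G'.V) : SGraph := π.preim v'.1 v'.2

instance [Finite G.X] (v' : G'.V) : Finite (π.fiber v').X := Subtype.finite

def vertexEquiv : G.V ≃ Σ v' : G'.V, (π.fiber v').V :=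
  (Equiv.sigmaFiberEquiv fun v : G.V =>
    (⟨π.toFun v.1, (π.map_r v.1).symm.trans (congrArg π.toFun v.2)⟩ : G'.V)).symm.trans
  (Equiv.sigmaCongrRight fun _ =>
    { toFun := fun p => ⟨⟨p.1.1, congrArg Subtype.val p.2⟩, Subtype.ext p.1.2⟩
      invFun := fun y => ⟨⟨y.1.1, congrArg Subtype.val y.2⟩, Subtype.ext y.1.2⟩
      left_inv := fun _ => rfl
      right_inv := fun _ => rfl })

def halfEdgesOverVertexEquiv :
    {f : G.HalfEdges // G'.r (π.toFun f.1) = π.toFun f.1} ≃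
      Σ v' : G'.V, (π.fiber v').HalfEdges :=
  (Equiv.sigmaFiberEquiv fun f => (⟨π.toFun f.1.1, f.2⟩ : G'.V)).symm.trans
  (Equiv.sigmaCongrRight fun v' =>
    { toFun := fun p =>
        ⟨⟨p.1.1.1, show π.toFun p.1.1.1 = v'.1 from congrArg Subtype.val p.2⟩,
          fun hc => p.1.1.2 (congrArg Subtype.val hc)⟩
      invFun := fun y =>
        have hy : π.toFun y.1.1 = v'.1 := y.1.2
        ⟨⟨⟨y.1.1, fun hc => y.2 (Subtype.ext hc)⟩, by rw [hy]; exact v'.2⟩, Subtype.ext hy⟩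
      left_inv := fun _ => rfl
      right_inv := fun _ => rfl })

theorem bijective_halfEdge_over_halfEdge :
    Function.Bijective fun f : {f : G.HalfEdges // G'.r (π.toFun f.1) ≠ π.toFun f.1} =>
      (⟨π.toFun f.1.1, f.2⟩ : G'.HalfEdges) := by
  refine ⟨fun a b hab => ?_, fun f' => ?_⟩
  · obtain ⟨x, -, hx⟩ := π.halfedge_unique (π.toFun a.1.1) a.2
    have hb : π.toFun b.1.1 = π.toFun a.1.1 := (congrArg Subtype.val hab).symm
    exact Subtype.ext (Subtype.ext ((hx _ rfl).trans (hx _ hb).symm))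
  · obtain ⟨x, hx, -⟩ := π.halfedge_unique f'.1 f'.2
    have hrx : G.r x ≠ x := fun hrx => f'.2 (by rw [← hx, ← π.map_r, hrx])
    exact ⟨⟨⟨x, hrx⟩, by rw [hx]; exact f'.2⟩, Subtype.ext hx⟩

variable [Finite G.X] [Finite G'.X]

theorem finsum_vertex_eq {M : Type*} [AddCommMonoid M] (f : G.X → M) :
    ∑ᶠ v : G.V, f v.1 = ∑ᶠ v' : G'.V, ∑ᶠ w : (π.fiber v').V, f w.1.1 := by
  have := Fintype.ofFinite G'.V
  have (v' : G'.V) := Fintype.ofFinite (π.fiber v').V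
  rw [← finsum_comp_equiv π.vertexEquiv.symm]
  simp only [finsum_eq_sum_of_fintype]
  exact Fintype.sum_sigma _

theorem card_halfEdges_eq : Nat.card G.HalfEdges =
    ∑ᶠ v' : G'.V, Nat.card (π.fiber v').HalfEdges + Nat.card G'.HalfEdges := by
  classical
  have := Fintype.ofFinite G'.V
  rw [← Nat.card_congr (Equiv.sumCompl fun f : G.HalfEdges => G'.r (π.toFun f.1) = π.toFun f.1),
    Nat.card_sum, Nat.card_congr π.halfEdgesOverVertexEquiv, Nat.card_sigma,
    finsum_eq_sum_of_fintype,
    Nat.card_eq_of_bijective (β := G'.HalfEdges) _ π.bijective_halfEdge_over_halfEdge]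

theorem card_edges_eq :
    Nat.card G.E = ∑ᶠ v' : G'.V, Nat.card (π.fiber v').E + Nat.card G'.E := by
  apply Nat.eq_of_mul_eq_mul_left two_pos
  rw [← G.card_halfEdges, π.card_halfEdges_eq, mul_add, mul_finsum, ← G'.card_halfEdges]
  simp only [SGraph.card_halfEdges]

end WEC

theorem WEC.genus_eq_general (G G' : SGraph) [Finite G.X] [Finite G'.X]
    (h : G.X → ℕ) (h' : G'.X → ℕ) (π : WEC G G' h h') :
    G.genusZ h = G'.genusZ h' := by
  have hfiber (v' : G'.V) : (h' v'.1 : ℤ) - 1 =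
      Nat.card (π.fiber v').E + ∑ᶠ w : (π.fiber v').V, ((h w.1.1 : ℤ) - 1) := by
    have hgenus : (π.fiber v').genusZ (fun x => h x.1) = h' v'.1 := π.preim_genus v'.1 v'.2
    rw [SGraph.genusZ_eq] at hgenus
    linarith
  rw [G.genusZ_eq, G'.genusZ_eq, π.card_edges_eq, π.finsum_vertex_eq fun x => (h x : ℤ) - 1,
    finsum_congr hfiber, finsum_add_distrib (Set.toFinite _) (Set.toFinite _), Nat.cast_add,
    Nat.cast_finsum]
  ring

/-- A weighted edge contraction between finite connected weighted graphs preserves the genus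
`b1(G) + Σ_v h(v)`. -/
theorem WEC.genus_eq (G G' : SGraph) [Finite G.X] [Finite G'.X]
    (h : G.X → ℕ) (h' : G'.X → ℕ) (hG : G.Connected) (hG' : G'.Connected)
    (π : WEC G G' h h') :
    G.genusZ h = G'.genusZ h' :=
  WEC.genus_eq_general G G' h h' π
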